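/- arXiv:1911.02973 — 4 statements merged into one kernel-verified Lean document; each statement's English description precedes it below -/
import Mathlib

section
/- Let φ : [r₀, ∞) → [0, ∞) be a monotone increasing differentiable function with r₀ ≥ 0. Then for every δ > 0, the set of r ∈ (r₀, ∞) where φ'(r) > φ(r)^{1+δ} has finite Lebesgue measure. -/
/-! Where `φ > 0`, the function `ψ = -φ ^ (-δ)` is increasing with values in `[-φ(b) ^ (-δ), 0]`
and `ψ' = δ φ' φ ^ (-δ - 1)`, so `ψ' ≥ δ` wherever `φ' > φ ^ (1 + δ)`. By the change of variables
formula for monotone functions, the measure of a set on which `ψ' ≥ δ` is at most `1 / δ` times the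
length of its image under `ψ`, hence finite. Where `φ` vanishes it has a local minimum, so
`φ' = 0` there. -/

open MeasureTheory Set

theorem MonotoneOn.ofReal_mul_volume_setOf_le_deriv_le {f : ℝ → ℝ} {U : Set ℝ}
    (hU : MeasurableSet U) (hf : MonotoneOn f U) (c : ℝ) :
    ENNReal.ofReal c * volume {x ∈ U | DifferentiableAt ℝ f x ∧ c ≤ deriv f x} ≤
      volume (f '' U) := by
  set s := {x ∈ U | DifferentiableAt ℝ f x ∧ c ≤ deriv f x}
  have hs : MeasurableSet s :=
    hU.inter ((measurableSet_of_differentiableAt ℝ f).inter (measurable_deriv f measurableSet_Ici))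
  calc ENNReal.ofReal c * volume s = ∫⁻ _ in s, ENNReal.ofReal c := (setLIntegral_const s _).symm
    _ ≤ ∫⁻ x in s, ENNReal.ofReal (deriv f x) :=
      setLIntegral_mono (measurable_deriv f).ennreal_ofReal fun x hx ↦
        ENNReal.ofReal_le_ofReal hx.2.2
    _ = volume (f '' s) :=
      lintegral_deriv_eq_volume_image_of_monotoneOn hs
        (fun x hx ↦ hx.2.1.hasDerivAt.hasDerivWithinAt) (hf.mono (sep_subset U _))
    _ ≤ volume (f '' U) := measure_mono (image_mono (sep_subset U _))

theorem MonotoneOn.volume_setOf_le_deriv_lt_top {f : ℝ → ℝ} {U : Set ℝ}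
    (hU : MeasurableSet U) (hf : MonotoneOn f U) (hbdd : Bornology.IsBounded (f '' U))
    {c : ℝ} (hc : 0 < c) :
    volume {x ∈ U | DifferentiableAt ℝ f x ∧ c ≤ deriv f x} < ⊤ :=
  ENNReal.lt_top_of_mul_ne_top_right
    ((hf.ofReal_mul_volume_setOf_le_deriv_le hU c).trans_lt hbdd.measure_lt_top).ne
    (ENNReal.ofReal_pos.2 hc).ne'

theorem pos_of_rpow_lt_deriv {φ : ℝ → ℝ} {s : Set ℝ} {r p : ℝ} (hs : s ∈ nhds r)
    (hnonneg : ∀ x ∈ s, 0 ≤ φ x) (hp : p ≠ 0) (h : φ r ^ p < deriv φ r) : 0 < φ r := by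
  refine (hnonneg r (mem_of_mem_nhds hs)).lt_of_ne fun hzero ↦ h.ne ?_
  have hmin : IsLocalMin φ r := Filter.mem_of_superset hs fun x hx ↦ hzero ▸ hnonneg x hx
  rw [← hzero, Real.zero_rpow hp, hmin.deriv_eq_zero]

theorem MonotoneOn.neg_rpow_neg {φ : ℝ → ℝ} {s : Set ℝ} (hφ : MonotoneOn φ s)
    (hpos : ∀ x ∈ s, 0 < φ x) {δ : ℝ} (hδ : 0 ≤ δ) : MonotoneOn (fun x ↦ -φ x ^ (-δ)) s :=
  fun _ hx _ hy hxy ↦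
    neg_le_neg (Real.rpow_le_rpow_of_nonpos (hpos _ hx) (hφ hx hy hxy) (neg_nonpos.2 hδ))

theorem le_deriv_neg_rpow_neg {φ : ℝ → ℝ} {r δ : ℝ} (hφ : 0 < φ r) (hδ : 0 ≤ δ)
    (h : φ r ^ (1 + δ) < deriv φ r) :
    DifferentiableAt ℝ (fun x ↦ -φ x ^ (-δ)) r ∧ δ ≤ deriv (fun x ↦ -φ x ^ (-δ)) r := by
  have hdiff : DifferentiableAt ℝ φ r :=
    differentiableAt_of_deriv_ne_zero ((Real.rpow_nonneg hφ.le _).trans_lt h).ne'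
  have hderiv : HasDerivAt (fun x ↦ -φ x ^ (-δ)) (δ * (deriv φ r * φ r ^ (-δ - 1))) r :=
    (hdiff.hasDerivAt.rpow_const (Or.inl hφ.ne')).fun_neg.congr_deriv (by ring)
  refine ⟨hderiv.differentiableAt, ?_⟩
  have hinv : φ r ^ (1 + δ) * φ r ^ (-δ - 1) = 1 := by
    rw [← Real.rpow_add hφ, show 1 + δ + (-δ - 1) = 0 by ring, Real.rpow_zero]
  calc δ = δ * (φ r ^ (1 + δ) * φ r ^ (-δ - 1)) := by rw [hinv, mul_one]
    _ ≤ δ * (deriv φ r * φ r ^ (-δ - 1)) := by gcongr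
    _ = deriv (fun x ↦ -φ x ^ (-δ)) r := hderiv.deriv.symm

theorem borel_calculus_lemma_general (r₀ : ℝ) (φ : ℝ → ℝ)
    (hnonneg : ∀ r ∈ Ici r₀, 0 ≤ φ r)
    (hmono : MonotoneOn φ (Ici r₀))
    (δ : ℝ) (hδ : 0 < δ) :
    volume {r : ℝ | r₀ < r ∧ φ r ^ (1 + δ) < deriv φ r} < ⊤ := by
  set E := {r : ℝ | r₀ < r ∧ φ r ^ (1 + δ) < deriv φ r}
  have hEpos : E ⊆ {r | r₀ < r ∧ 0 < φ r} := fun r ⟨hr, h⟩ ↦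
    ⟨hr, pos_of_rpow_lt_deriv (Ici_mem_nhds hr) hnonneg (by positivity) h⟩
  rcases eq_empty_or_nonempty {r | r₀ < r ∧ 0 < φ r} with hempty | ⟨b, hb₀, hb⟩
  · simp [subset_empty_iff.1 (hempty ▸ hEpos)]
  set ψ := fun x ↦ -φ x ^ (-δ)
  have hmono_b : MonotoneOn φ (Ici b) := hmono.mono (Ici_subset_Ici.2 hb₀.le)
  have hpos_b : ∀ x ∈ Ici b, 0 < φ x := fun x hx ↦ hb.trans_le (hmono_b self_mem_Ici hx hx)
  have hψ_mono : MonotoneOn ψ (Ici b) := hmono_b.neg_rpow_neg hpos_b hδ.le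
  have hψ_bdd : Bornology.IsBounded (ψ '' Ici b) := by
    refine Metric.isBounded_Icc (-φ b ^ (-δ)) 0 |>.subset ?_
    rintro _ ⟨x, hx, rfl⟩
    exact ⟨hψ_mono self_mem_Ici hx hx,
      neg_nonpos.2 (Real.rpow_nonneg (hpos_b x hx).le _)⟩
  have hE : E ⊆ Ioo r₀ b ∪ {x ∈ Ici b | DifferentiableAt ℝ ψ x ∧ δ ≤ deriv ψ x} := by
    rintro r ⟨hr, h⟩
    rcases lt_or_ge r b with hrb | hbr
    · exact Or.inl ⟨hr, hrb⟩
    · exact Or.inr ⟨hbr, le_deriv_neg_rpow_neg (hpos_b r hbr) hδ.le h⟩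
  refine (measure_mono hE).trans_lt <| (measure_union_le _ _).trans_lt <|
    ENNReal.add_lt_top.2 ⟨by simp, ?_⟩
  exact hψ_mono.volume_setOf_le_deriv_lt_top measurableSet_Ici hψ_bdd hδ

/-- Borel's calculus lemma: for a nonnegative, monotone increasing, differentiable
function `φ` on `[r₀, ∞)` (with `r₀ ≥ 0`) and every `δ > 0`, the set of `r > r₀`
where `φ'(r) > φ(r)^(1+δ)` has finite Lebesgue measure. -/
theorem borel_calculus_lemma (r₀ : ℝ) (hr₀ : 0 ≤ r₀) (φ : ℝ → ℝ)
    (hnonneg : ∀ r ∈ Ici r₀, 0 ≤ φ r)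
    (hmono : MonotoneOn φ (Ici r₀))
    (hdiff : ∀ r ∈ Ici r₀, DifferentiableAt ℝ φ r)
    (δ : ℝ) (hδ : 0 < δ) :
    volume {r : ℝ | r₀ < r ∧ φ r ^ (1 + δ) < deriv φ r} < ⊤ :=
  borel_calculus_lemma_general r₀ φ hnonneg hmono δ hδ
end

section
/- Let T : [r₀, ∞) → [0, ∞) be a nondecreasing function with r₀ > 1. Suppose there exist constants C > 0 and C' ≥ 0 such that for all r outside a set E ⊂ (r₀, ∞) of finite Lebesgue measure, T(r) ≤ C·(log⁺ T(r) + log r) + C'. Then T(r) = O(log r) as r → ∞, i.e., there exist constants A, B such that T(r) ≤ A·log r + B for all r ≥ r₀. -/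
/-!
Since `T` is nondecreasing and `E` has finite measure `m`, every `r ≥ r₀` is followed by some
`s ∈ (r, r + m + 1]` outside `E`, and `T r ≤ T s`. At `s` the hypothesis applies, and the
`log⁺ T` term is absorbed using `C log⁺ x ≤ x / 2 + C log⁺ (2C)`. Finally
`log s ≤ log r + log (m + 2)`.
-/

open MeasureTheory Set Real

lemma exists_mem_Ioc_notMem_of_volume_lt {E : Set ℝ} {ℓ : ℝ} (r : ℝ)
    (hE : volume E < ENNReal.ofReal ℓ) : ∃ s ∈ Ioc r (r + ℓ), s ∉ E := by
  by_contra! hsub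
  have := measure_mono (μ := volume) (fun s hs ↦ hsub s hs : Ioc r (r + ℓ) ⊆ E)
  rw [Real.volume_Ioc, add_sub_cancel_left] at this
  exact this.not_gt hE

lemma Real.posLog_le_self {x : ℝ} (hx : 0 ≤ x) : log⁺ x ≤ x :=
  max_le hx (log_le_self hx)

lemma Real.posLog_le_div_add_posLog {x c : ℝ} (hx : 0 ≤ x) (hc : 0 < c) :
    log⁺ x ≤ x / c + log⁺ c :=
  calc log⁺ x = log⁺ (x / c * c) := by rw [div_mul_cancel₀ x hc.ne']
    _ ≤ log⁺ (x / c) + log⁺ c := posLog_mul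
    _ ≤ x / c + log⁺ c := by gcongr; exact posLog_le_self (div_nonneg hx hc.le)

lemma le_of_le_mul_posLog_add {x c a d : ℝ} (hx : 0 ≤ x) (hc : 0 < c)
    (h : x ≤ c * (log⁺ x + a) + d) : x ≤ 2 * c * a + 2 * c * log⁺ (2 * c) + 2 * d := by
  have hlog := mul_le_mul_of_nonneg_left (posLog_le_div_add_posLog hx (by positivity : 0 < 2 * c))
    hc.le
  have hhalf : c * (x / (2 * c) + log⁺ (2 * c)) = x / 2 + c * log⁺ (2 * c) := by
    field_simp
  linarith

lemma Real.log_le_log_add_log_one_add {r s ℓ : ℝ} (hr : 1 ≤ r) (hℓ : 0 ≤ ℓ) (hs : 0 < s)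
    (hsr : s ≤ r + ℓ) : log s ≤ log r + log (1 + ℓ) := by
  rw [← log_mul (by positivity) (by positivity)]
  exact log_le_log hs (by nlinarith)

theorem growth_logPlus_self_general (r₀ : ℝ) (hr₀ : 1 < r₀) (T : ℝ → ℝ)
    (hnonneg : ∀ r ∈ Ici r₀, 0 ≤ T r)
    (hmono : MonotoneOn T (Ici r₀))
    (C C' : ℝ) (hC : 0 < C)
    (E : Set ℝ) (hEfin : volume E < ⊤)
    (hineq : ∀ r ∈ Ioi r₀ \ E, T r ≤ C * (max (Real.log (T r)) 0 + Real.log r) + C') :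
    ∃ A B : ℝ, ∀ r ∈ Ici r₀, T r ≤ A * Real.log r + B := by
  set m := (volume E).toReal
  have hm : volume E < ENNReal.ofReal (m + 1) := by
    rw [← ENNReal.ofReal_toReal hEfin.ne, ENNReal.ofReal_lt_ofReal_iff (by positivity)]
    exact lt_add_one m
  refine ⟨2 * C, 2 * C * log⁺ (2 * C) + 2 * C' + 2 * C * log (1 + (m + 1)), fun r hr ↦ ?_⟩
  obtain ⟨s, ⟨hrs, hsr⟩, hsE⟩ := exists_mem_Ioc_notMem_of_volume_lt r hm
  have hs : r₀ < s := lt_of_le_of_lt hr hrs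
  have hTs : T s ≤ 2 * C * log s + 2 * C * log⁺ (2 * C) + 2 * C' := by
    refine le_of_le_mul_posLog_add (hnonneg s hs.le) hC ?_
    simpa only [posLog_apply, max_comm] using hineq s ⟨hs, hsE⟩
  have hlog : log s ≤ log r + log (1 + (m + 1)) :=
    log_le_log_add_log_one_add (hr₀.le.trans hr) (by positivity) (by linarith) hsr
  calc T r ≤ T s := hmono hr hs.le hrs.le
    _ ≤ 2 * C * log s + 2 * C * log⁺ (2 * C) + 2 * C' := hTs
    _ ≤ _ := by nlinarith

/-- If a nondecreasing nonnegative function `T` on `[r₀,∞)` (`r₀ > 1`) satisfies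
`T(r) ≤ C(log⁺ T(r) + log r) + C'` outside a set of finite Lebesgue measure,
then `T(r) = O(log r)`. -/
theorem growth_logPlus_self (r₀ : ℝ) (hr₀ : 1 < r₀) (T : ℝ → ℝ)
    (hnonneg : ∀ r ∈ Ici r₀, 0 ≤ T r)
    (hmono : MonotoneOn T (Ici r₀))
    (C C' : ℝ) (hC : 0 < C) (hC' : 0 ≤ C')
    (E : Set ℝ) (hE : E ⊆ Ioi r₀) (hEfin : volume E < ⊤)
    (hineq : ∀ r ∈ Ioi r₀ \ E, T r ≤ C * (max (Real.log (T r)) 0 + Real.log r) + C') :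
    ∃ A B : ℝ, ∀ r ∈ Ici r₀, T r ≤ A * Real.log r + B :=
  growth_logPlus_self_general r₀ hr₀ T hnonneg hmono C C' hC E hEfin hineq
end

section
/- Let γ : {|z| ≥ 1} → ℂ be holomorphic, and suppose the characteristic T(r) := ∫_{r₀}^r (dρ/ρ) ∫_{r₀≤|z|<ρ} (i/2π)|γ'(z)|² dz∧dz̄ satisfies T(r) = O(log r). Then γ extends to a holomorphic map from a neighborhood of ∞ in ℙ¹ to ℂ, i.e., γ(1/w) extends holomorphically across w = 0. -/
/-!
Let `A(ρ) = (1/π) ∫_{r₀ ≤ |z| < ρ} |γ'|²`. Since `A` is nondecreasing,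
`T(ρ²) ≥ ∫_ρ^{ρ²} A(σ) dσ/σ ≥ A(ρ) log ρ`, so `T = O(log r)` bounds `A`: `γ` has finite Dirichlet
energy near `∞`. The Dirichlet energy is conformally invariant, so `f(w) = γ(1/w)` has finite
energy on a punctured disc around `0`. As `|f'|² = |f'²|` is bounded by its mean over the disc
`B(w, |w|/2)`, whose energy tends to `0` with `w`, we get `f'(w) = o(1/w)`. Hence `f'` has a
removable singularity; its extension has a primitive on the disc, from which `f` differs by a
constant on the connected punctured disc.
-/

open MeasureTheory Set Metric Filter Real Function
open scoped ENNReal Topology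

theorem exists_forall_le_of_integral_div_le_log {a : ℝ → ℝ} {r₀ A B : ℝ} (hr₀ : 1 < r₀)
    (ha : MonotoneOn a (Ici r₀)) (ha0 : ∀ ρ ∈ Ici r₀, 0 ≤ a ρ)
    (h : ∀ r ∈ Ici r₀, ∫ ρ in r₀..r, 1 / ρ * a ρ ≤ A * log r + B) :
    ∃ M, ∀ ρ ∈ Ici r₀, a ρ ≤ M := by
  have hsub : ∀ {b c}, r₀ ≤ b → b ≤ c → uIcc b c ⊆ Ici r₀ := fun hb hbc σ hσ => by
    rw [uIcc_of_le hbc] at hσ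
    exact le_trans hb hσ.1
  have hinv : ContinuousOn (fun σ : ℝ => 1 / σ) (Ici r₀) :=
    continuousOn_const.div continuousOn_id fun σ hσ => (one_pos.trans (hr₀.trans_le hσ)).ne'
  have hint : ∀ b c, r₀ ≤ b → b ≤ c → IntervalIntegrable (fun σ => 1 / σ * a σ) volume b c :=
    fun b c hb hbc => ((ha.mono (hsub hb hbc)).intervalIntegrable).continuousOn_mul
      (hinv.mono (hsub hb hbc))
  refine ⟨2 * A + |B| / log r₀, fun ρ hρ => ?_⟩
  have hρ1 : 1 < ρ := lt_of_lt_of_le hr₀ hρ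
  have hρsq : ρ ≤ ρ ^ 2 := by nlinarith
  have hlow : a ρ * log ρ ≤ ∫ σ in ρ..ρ ^ 2, 1 / σ * a σ :=
    calc a ρ * log ρ = ∫ σ in ρ..ρ ^ 2, 1 / σ * a ρ := by
          rw [intervalIntegral.integral_mul_const, integral_one_div_of_pos (by positivity)
            (by positivity), sq, mul_div_cancel_left₀ _ (by positivity), mul_comm]
      _ ≤ ∫ σ in ρ..ρ ^ 2, 1 / σ * a σ := by
          refine intervalIntegral.integral_mono_on hρsq
            (((hinv.mono (hsub hρ hρsq)).intervalIntegrable).mul_const _)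
            (hint ρ _ hρ hρsq) fun σ hσ => ?_
          have : 0 < σ := by linarith [hσ.1]
          gcongr
          exact ha hρ (le_trans hρ hσ.1) hσ.1
  have hfirst : 0 ≤ ∫ σ in r₀..ρ, 1 / σ * a σ :=
    intervalIntegral.integral_nonneg hρ fun σ hσ =>
      mul_nonneg (one_div_nonneg.2 (by linarith [hσ.1])) (ha0 σ hσ.1)
  have hT := h (ρ ^ 2) (le_trans hρ hρsq)
  rw [← intervalIntegral.integral_add_adjacent_intervals (hint r₀ ρ le_rfl hρ) (hint ρ _ hρ hρsq),
    log_pow, Nat.cast_ofNat] at hT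
  have hlogr₀ : 0 < log r₀ := log_pos hr₀
  have hlog : log r₀ ≤ log ρ := log_le_log (by linarith) hρ
  have key : (a ρ - 2 * A) * log ρ ≤ |B| := by nlinarith [le_abs_self B]
  have : a ρ - 2 * A ≤ |B| / log r₀ :=
    ((le_div_iff₀ (by linarith)).2 key).trans (div_le_div_of_nonneg_left (abs_nonneg B) hlogr₀ hlog)
  linarith

section Annulus
variable {E : Type*} [NormedAddCommGroup E] [ProperSpace E] [MeasurableSpace E]
  [OpensMeasurableSpace E] {μ : Measure E} [IsFiniteMeasureOnCompacts μ] {g : E → ℝ} {r : ℝ}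

theorem integrableOn_annulus (hg : ContinuousOn g {z | r ≤ ‖z‖}) (R : ℝ) :
    IntegrableOn g {z | r ≤ ‖z‖ ∧ ‖z‖ < R} μ := by
  have hK : IsCompact ({z : E | r ≤ ‖z‖} ∩ closedBall 0 R) :=
    (isCompact_closedBall 0 R).inter_left (isClosed_le continuous_const continuous_norm)
  refine ((hg.mono inter_subset_left).integrableOn_compact hK).mono_set fun z hz => ?_
  exact ⟨hz.1, mem_closedBall_zero_iff.2 hz.2.le⟩

theorem monotone_setIntegral_annulus (hg : ContinuousOn g {z | r ≤ ‖z‖}) (hg0 : ∀ z, 0 ≤ g z) :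
    Monotone fun R => ∫ z in {z | r ≤ ‖z‖ ∧ ‖z‖ < R}, g z ∂μ := fun _ _ h =>
  setIntegral_mono_set (integrableOn_annulus hg _) (.of_forall hg0)
    (Eventually.of_forall fun _ hz => ⟨hz.1, hz.2.trans_le h⟩)

end Annulus

theorem setLIntegral_ofReal_iUnion_le {α ι : Type*} [MeasurableSpace α] {μ : Measure α}
    [Countable ι] {s : ι → Set α} (hs : Directed (· ⊆ ·) s) {g : α → ℝ}
    (hg : ∀ i, IntegrableOn g (s i) μ) (hg0 : ∀ x, 0 ≤ g x) {M : ℝ}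
    (hM : ∀ i, ∫ x in s i, g x ∂μ ≤ M) :
    ∫⁻ x in ⋃ i, s i, ENNReal.ofReal (g x) ∂μ ≤ ENNReal.ofReal M := by
  rw [setLIntegral_iUnion_of_directed _ hs]
  refine iSup_le fun i => ?_
  rw [← ofReal_integral_eq_lintegral_ofReal (hg i) (.of_forall hg0)]
  exact ENNReal.ofReal_le_ofReal (hM i)

theorem image_inv_ball_zero_diff_zero {𝕜 : Type*} [NormedDivisionRing 𝕜] {r : ℝ} (hr : 0 < r) :
    (·⁻¹) '' (ball (0 : 𝕜) r \ {0}) = {z : 𝕜 | r⁻¹ < ‖z‖} := by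
  ext z
  rw [image_inv_eq_inv]
  simp only [Set.mem_inv, Set.mem_sdiff, mem_ball, dist_zero_right, norm_inv, mem_singleton_iff,
    inv_eq_zero, mem_ofPred_eq]
  constructor
  · rintro ⟨h, hz⟩
    exact (inv_lt_comm₀ (norm_pos_iff.2 hz) hr).1 h
  · intro h
    have hz : 0 < ‖z‖ := (inv_pos.2 hr).trans h
    exact ⟨(inv_lt_comm₀ hz hr).2 h, norm_pos_iff.1 hz⟩

theorem isPreconnected_ball_diff_center (c : ℂ) (R : ℝ) : IsPreconnected (ball c R \ {c}) := by
  have : (fun p : ℝ × ℝ => circleMap c p.1 p.2) '' (Ioo 0 R ×ˢ univ) = ball c R \ {c} := by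
    ext z
    constructor
    · rintro ⟨p, ⟨hr, -⟩, rfl⟩
      refine ⟨?_, ?_⟩
      · simpa [dist_eq_norm, circleMap_sub_center, abs_of_pos hr.1] using hr.2
      · exact circleMap_ne_center hr.1.ne'
    · rintro ⟨hz, hzc⟩
      refine ⟨(‖z - c‖, (z - c).arg), ⟨⟨norm_pos_iff.2 (sub_ne_zero.2 hzc), ?_⟩, trivial⟩, ?_⟩
      · simpa [dist_eq_norm] using hz
      · simp [circleMap, Complex.norm_mul_exp_arg_mul_I]
  rw [← this]
  exact (isPreconnected_Ioo.prod isPreconnected_univ).image _ circleMap.continuous.continuousOn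

section Holomorphic

variable {E : Type*} [NormedAddCommGroup E] [NormedSpace ℂ E] [CompleteSpace E]

theorem ofReal_two_pi_mul_enorm_le_lintegral_circle {G : ℂ → E} {c : ℂ} {r : ℝ}
    (hG : DiffContOnCl ℂ G (ball c |r|)) :
    ENNReal.ofReal (2 * π) * ‖G c‖ₑ ≤ ∫⁻ θ in Ioo (-π) π, ‖G (circleMap c r θ)‖ₑ := by
  have hmean : (2 * π) • G c = ∫ θ in -π..π, G (circleMap c r θ) := by
    rw [← hG.circleAverage, circleAverage_eq_integral_add (-π), smul_inv_smul₀ (by positivity),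
      intervalIntegral.integral_comp_add_right (fun θ => G (circleMap c r θ))]
    ring_nf
  calc ENNReal.ofReal (2 * π) * ‖G c‖ₑ = ‖(2 * π) • G c‖ₑ := by
        rw [enorm_smul, Real.enorm_of_nonneg (by positivity)]
    _ ≤ ∫⁻ θ in Ioc (-π) π, ‖G (circleMap c r θ)‖ₑ := by
        rw [hmean, intervalIntegral.integral_of_le (by linarith [pi_pos])]
        exact enorm_integral_le_lintegral_enorm _
    _ = ∫⁻ θ in Ioo (-π) π, ‖G (circleMap c r θ)‖ₑ := by
        rw [Measure.restrict_congr_set Ioo_ae_eq_Ioc]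

theorem ofReal_mul_enorm_le_lintegral_ball {G : ℂ → E} {c : ℂ} {s : ℝ} (hs : 0 ≤ s)
    (hG : DifferentiableOn ℂ G (closedBall c s)) :
    ENNReal.ofReal (π * s ^ 2) * ‖G c‖ₑ ≤ ∫⁻ z in ball c s, ‖G z‖ₑ := by
  set Q : Set (ℝ × ℝ) := Ioo 0 s ×ˢ Ioo (-π) π
  have hQ : MeasurableSet Q := measurableSet_Ioo.prod measurableSet_Ioo
  have hQG : MapsTo (fun p : ℝ × ℝ => circleMap c p.1 p.2) Q (ball c s) := fun p hp => by
    simpa [dist_eq_norm, circleMap_sub_center, abs_of_pos hp.1.1] using hp.1.2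
  have hr : ∫⁻ r in Ioo 0 s, ENNReal.ofReal r = ENNReal.ofReal (s ^ 2 / 2) := by
    rw [← ofReal_integral_eq_lintegral_ofReal, ← integral_Ioc_eq_integral_Ioo,
      ← intervalIntegral.integral_of_le hs, integral_id, sq, zero_pow two_ne_zero, sub_zero]
    · exact continuous_id.integrableOn_Icc.mono_set Ioo_subset_Icc_self
    · exact (ae_restrict_iff' measurableSet_Ioo).2 (.of_forall fun r hr => hr.1.le)
  calc ENNReal.ofReal (π * s ^ 2) * ‖G c‖ₑ
      = ∫⁻ r in Ioo 0 s, ENNReal.ofReal r * (ENNReal.ofReal (2 * π) * ‖G c‖ₑ) := by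
        rw [lintegral_mul_const _ ENNReal.measurable_ofReal, hr, ← mul_assoc,
          ← ENNReal.ofReal_mul (by positivity)]
        ring_nf
    _ ≤ ∫⁻ r in Ioo 0 s, ∫⁻ θ in Ioo (-π) π, ENNReal.ofReal r * ‖G (circleMap c r θ)‖ₑ := by
        refine setLIntegral_mono' measurableSet_Ioo fun r hr => ?_
        rw [lintegral_const_mul' _ _ ENNReal.ofReal_ne_top]
        gcongr
        refine ofReal_two_pi_mul_enorm_le_lintegral_circle (hG.diffContOnCl_ball ?_)
        exact closedBall_subset_closedBall (by rw [abs_of_pos hr.1]; exact hr.2.le)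
    _ = ∫⁻ p in Q, ENNReal.ofReal p.1 * ‖G (circleMap c p.1 p.2)‖ₑ := by
        rw [Measure.volume_eq_prod, ← Measure.prod_restrict, lintegral_prod]
        rw [Measure.prod_restrict, ← Measure.volume_eq_prod]
        refine measurable_fst.ennreal_ofReal.aemeasurable.mul (ContinuousOn.aemeasurable ?_ hQ)
        exact continuous_enorm.comp_continuousOn (hG.continuousOn.comp
          circleMap.continuous.continuousOn (hQG.mono_right ball_subset_closedBall))
    _ = ∫⁻ p in Q, ENNReal.ofReal p.1 •
          (ball c s).indicator (fun u => ‖G u‖ₑ) (c + Complex.polarCoord.symm p) := by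
        refine setLIntegral_congr_fun hQ fun p hp => ?_
        have hpolar : c + Complex.polarCoord.symm p = circleMap c p.1 p.2 := by
          rw [Complex.polarCoord_symm_apply, circleMap, Complex.exp_mul_I, ← Complex.ofReal_cos,
            ← Complex.ofReal_sin]
        rw [hpolar, indicator_of_mem (hQG hp), smul_eq_mul]
    _ ≤ ∫⁻ p in polarCoord.target, ENNReal.ofReal p.1 •
          (ball c s).indicator (fun u => ‖G u‖ₑ) (c + Complex.polarCoord.symm p) :=
        lintegral_mono_set (by rw [polarCoord_target]; exact prod_mono (fun r hr => hr.1) le_rfl)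
    _ = ∫⁻ z in ball c s, ‖G z‖ₑ := by
        rw [Complex.lintegral_comp_polarCoord_symm (fun z => (ball c s).indicator _ (c + z)),
          lintegral_add_left_eq_self, lintegral_indicator measurableSet_ball]

theorem differentiableOn_update_limUnder_of_deriv_isLittleO {f : ℂ → E} {s : Set ℂ} {c : ℂ}
    (hc : s ∈ 𝓝 c) (hd : DifferentiableOn ℂ f (s \ {c}))
    (ho : deriv f =o[𝓝[≠] c] fun z => (z - c)⁻¹) :
    DifferentiableOn ℂ (update f c (limUnder (𝓝[≠] c) f)) s := by
  obtain ⟨R, hR, hRs⟩ := Metric.mem_nhds_iff.1 hc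
  have hP : IsOpen (ball c R \ {c}) := isOpen_ball.sdiff isClosed_singleton
  have hdR : DifferentiableOn ℂ f (ball c R \ {c}) := hd.mono (sdiff_subset_sdiff_left hRs)
  have ho' : (fun z => deriv f z - deriv f c) =o[𝓝[≠] c] fun z => (z - c)⁻¹ := by
    refine ho.sub (Asymptotics.isLittleO_const_left.2 (Or.inr ?_))
    refine tendsto_norm_inv_nhdsNE_zero_atTop.comp (tendsto_nhdsWithin_iff.2 ⟨?_, ?_⟩)
    · simpa using ((continuous_sub_right c).tendsto c).mono_left nhdsWithin_le_nhds
    · exact eventually_mem_nhdsWithin.mono fun z hz => sub_ne_zero.2 hz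
  obtain ⟨F, hF⟩ := (Complex.differentiableOn_update_limUnder_of_isLittleO (ball_mem_nhds c hR)
    (hdR.deriv hP) ho').isExactOn_ball
  obtain ⟨a, ha⟩ := hP.exists_eq_add_of_deriv_eq (isPreconnected_ball_diff_center c R) hdR
    (fun z hz => (hF z hz.1).differentiableAt.differentiableWithinAt)
    (fun z hz => by rw [(hF z hz.1).deriv, update_of_ne hz.2])
  have hlim : Tendsto f (𝓝[≠] c) (𝓝 (F c + a)) :=
    ((hF c (mem_ball_self hR)).continuousAt.tendsto.mono_left nhdsWithin_le_nhds
      |>.add_const a).congr' (eventually_of_mem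
        (sdiff_mem_nhdsWithin_compl (ball_mem_nhds c hR) _) fun z hz => (ha hz).symm)
  rw [← Complex.differentiableOn_compl_singleton_and_continuousAt_iff hc, hlim.limUnder_eq]
  refine ⟨fun z hz => ?_, continuousAt_update_same.2 hlim⟩
  exact (hd z hz).congr (fun y hy => update_of_ne hy.2 _ _) (update_of_ne hz.2 _ _)

end Holomorphic

noncomputable def dirichletEnergy (f : ℂ → ℂ) (s : Set ℂ) : ℝ≥0∞ :=
  ∫⁻ z in s, ‖deriv f z‖ₑ ^ 2

theorem dirichletEnergy_comp {γ φ : ℂ → ℂ} {s : Set ℂ} (hs : MeasurableSet s)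
    (hφ : ∀ z ∈ s, DifferentiableAt ℂ φ z) (hγ : ∀ z ∈ s, DifferentiableAt ℂ γ (φ z))
    (hinj : InjOn φ s) :
    dirichletEnergy (γ ∘ φ) s = dirichletEnergy γ (φ '' s) := by
  have hφ' : ∀ z ∈ s, HasFDerivWithinAt φ
      (((1 : ℂ →L[ℂ] ℂ).smulRight (deriv φ z)).restrictScalars ℝ) s z := fun z hz =>
    ((hφ z hz).hasDerivAt.hasFDerivAt.restrictScalars ℝ).hasFDerivWithinAt
  rw [dirichletEnergy, dirichletEnergy,
    lintegral_image_eq_lintegral_abs_det_fderiv_mul volume hs hφ' hinj]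
  refine setLIntegral_congr_fun hs fun z hz => ?_
  rw [deriv_comp z (hγ z hz) (hφ z hz)]
  -- the real Jacobian of `w ↦ a * w` is `|a|²`
  simp [ContinuousLinearMap.det, LinearMap.det_restrictScalars, Algebra.norm_complex_eq,
    Complex.normSq_eq_norm_sq, ENNReal.ofReal_pow, ofReal_norm, mul_pow, mul_comm]

theorem eventually_closedBall_half_subset_ball_diff_center {c : ℂ} {R : ℝ} (hR : 0 < R) :
    ∀ᶠ z in 𝓝[≠] c, closedBall z (‖z - c‖ / 2) ⊆ ball c R \ {c} := by
  filter_upwards [self_mem_nhdsWithin,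
    nhdsWithin_le_nhds (ball_mem_nhds c (by positivity : 0 < 2 * R / 3))] with z hzc hz u hu
  rw [mem_closedBall, dist_eq_norm] at hu
  rw [mem_ball, dist_eq_norm] at hz
  have hzc' : 0 < ‖z - c‖ := norm_pos_iff.2 (sub_ne_zero.2 hzc)
  refine ⟨?_, fun h => ?_⟩
  · rw [mem_ball, dist_eq_norm, ← sub_add_sub_cancel u z c]
    linarith [norm_add_le (u - z) (z - c)]
  · rw [mem_singleton_iff.1 h, norm_sub_rev] at hu
    linarith

theorem deriv_isLittleO_of_dirichletEnergy_ne_top {f : ℂ → ℂ} {c : ℂ} {R : ℝ} (hR : 0 < R)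
    (hd : DifferentiableOn ℂ f (ball c R \ {c})) (hE : dirichletEnergy f (ball c R \ {c}) ≠ ∞) :
    deriv f =o[𝓝[≠] c] fun z => (z - c)⁻¹ := by
  set P := ball c R \ {c}
  have hP : IsOpen P := isOpen_ball.sdiff isClosed_singleton
  have hsub := eventually_closedBall_half_subset_ball_diff_center (c := c) hR
  have htail :
      Tendsto (fun z => ∫⁻ u in ball z (‖z - c‖ / 2), ‖deriv f u‖ₑ ^ 2) (𝓝[≠] c) (𝓝 0) := by
    have hvol :
        Tendsto (fun z : ℂ => ENNReal.ofReal (‖z - c‖ / 2) ^ 2 * NNReal.pi) (𝓝 c) (𝓝 0) := by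
      have h := ((continuous_norm.comp (continuous_sub_right c)).div_const 2).tendsto c
      simpa using ENNReal.Tendsto.mul_const
        (ENNReal.Tendsto.pow (n := 2) (ENNReal.tendsto_ofReal h)) (Or.inr ENNReal.coe_ne_top)
    have hvolP : Tendsto (volume.restrict P ∘ fun z => ball z (‖z - c‖ / 2)) (𝓝[≠] c) (𝓝 0) :=
      tendsto_of_tendsto_of_tendsto_of_le_of_le tendsto_const_nhds
        (hvol.mono_left nhdsWithin_le_nhds) (fun _ => zero_le)
        fun z => (Measure.restrict_apply_le _ _).trans (Complex.volume_ball _ _).le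
    refine (tendsto_setLIntegral_zero hE hvolP).congr' ?_
    filter_upwards [hsub] with z hz
    rw [Measure.restrict_restrict_of_subset (ball_subset_closedBall.trans hz)]
  have hne : ∀ᶠ z in 𝓝[≠] c, (z - c)⁻¹ = 0 → deriv f z = 0 :=
    eventually_mem_nhdsWithin.mono fun z hz h => absurd (inv_eq_zero.1 h) (sub_ne_zero.2 hz)
  rw [Asymptotics.isLittleO_iff_tendsto' hne]
  simp only [div_inv_eq_mul]
  refine NormedAddGroup.tendsto_nhds_zero.2 fun ε hε => ?_
  have hε' : 0 < ENNReal.ofReal (π / 4 * ε ^ 2) := ENNReal.ofReal_pos.2 (by positivity)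
  filter_upwards [hsub, (tendsto_order.1 htail).2 _ hε'] with z hz hI
  have hG : DifferentiableOn ℂ (fun u => deriv f u ^ 2) (closedBall z (‖z - c‖ / 2)) :=
    ((hd.deriv hP).pow 2).mono hz
  have : ENNReal.ofReal (π / 4 * ‖deriv f z * (z - c)‖ ^ 2) < ENNReal.ofReal (π / 4 * ε ^ 2) :=
    calc ENNReal.ofReal (π / 4 * ‖deriv f z * (z - c)‖ ^ 2)
        = ENNReal.ofReal (π * (‖z - c‖ / 2) ^ 2) * ‖deriv f z ^ 2‖ₑ := by
          rw [← ofReal_norm, ← ENNReal.ofReal_mul (by positivity), norm_pow, norm_mul]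
          ring_nf
      _ ≤ ∫⁻ u in ball z (‖z - c‖ / 2), ‖deriv f u ^ 2‖ₑ :=
          ofReal_mul_enorm_le_lintegral_ball (by positivity) hG
      _ = ∫⁻ u in ball z (‖z - c‖ / 2), ‖deriv f u‖ₑ ^ 2 := by simp only [enorm_pow]
      _ < ENNReal.ofReal (π / 4 * ε ^ 2) := hI
  rw [ENNReal.ofReal_lt_ofReal_iff (by positivity)] at this
  exact lt_of_pow_lt_pow_left₀ 2 hε.le (lt_of_mul_lt_mul_left this (by positivity))

theorem dirichletEnergy_ne_top_of_characteristic_le_log {γ : ℂ → ℂ} {r₀ A B : ℝ} (hr₀ : 1 < r₀)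
    (hγ : ContinuousOn (fun z => ‖deriv γ z‖ ^ 2) {z | r₀ ≤ ‖z‖})
    (hT : ∀ r ∈ Ici r₀, ∫ ρ in r₀..r, 1 / ρ *
      (∫ z in {z : ℂ | r₀ ≤ ‖z‖ ∧ ‖z‖ < ρ}, 1 / π * ‖deriv γ z‖ ^ 2) ≤ A * log r + B) :
    dirichletEnergy γ {z | r₀ ≤ ‖z‖} ≠ ∞ := by
  set a := fun ρ => ∫ z in {z : ℂ | r₀ ≤ ‖z‖ ∧ ‖z‖ < ρ}, 1 / π * ‖deriv γ z‖ ^ 2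
  have ha : Monotone a :=
    monotone_setIntegral_annulus (hγ.const_smul (1 / π)) fun z => by positivity
  obtain ⟨M, hM⟩ := exists_forall_le_of_integral_div_le_log hr₀ (ha.monotoneOn _)
    (fun ρ _ => integral_nonneg fun z => by positivity) hT
  have hmono : Monotone fun n : ℕ => {z : ℂ | r₀ ≤ ‖z‖ ∧ ‖z‖ < n} := fun m n h z hz =>
    ⟨hz.1, hz.2.trans_le (Nat.cast_le.2 h)⟩
  refine ne_top_of_le_ne_top (ENNReal.ofReal_ne_top (r := π * M)) ?_
  calc dirichletEnergy γ {z | r₀ ≤ ‖z‖}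
      ≤ ∫⁻ z in ⋃ n : ℕ, {z : ℂ | r₀ ≤ ‖z‖ ∧ ‖z‖ < n}, ENNReal.ofReal (‖deriv γ z‖ ^ 2) := by
        simp_rw [dirichletEnergy, ENNReal.ofReal_pow (norm_nonneg _), ofReal_norm]
        refine lintegral_mono_set fun z hz => ?_
        obtain ⟨n, hn⟩ := exists_nat_gt ‖z‖
        exact mem_iUnion.2 ⟨n, hz, hn⟩
    _ ≤ ENNReal.ofReal (π * M) := by
        refine setLIntegral_ofReal_iUnion_le hmono.directed_le
          (fun n => integrableOn_annulus hγ _) (fun z => by positivity) fun n => ?_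
        have := (ha (le_max_left (n : ℝ) r₀)).trans (hM _ (le_max_right _ r₀))
        simp only [a, integral_const_mul, one_div] at this
        rwa [inv_mul_le_iff₀ pi_pos] at this

/-- If a holomorphic map `γ : {|z| ≥ 1} → ℂ` has characteristic function
`T(r) = O(log r)`, then `γ(1/w)` extends holomorphically across `w = 0`. -/
theorem extension_of_log_growth (r₀ : ℝ) (hr₀ : 1 < r₀) (γ : ℂ → ℂ)
    (hγ : DifferentiableOn ℂ γ {z : ℂ | 1 ≤ ‖z‖})
    (T : ℝ → ℝ)
    (hT : T = fun r => ∫ ρ in r₀..r, (1 / ρ) *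
      (∫ z in {z : ℂ | r₀ ≤ ‖z‖ ∧ ‖z‖ < ρ}, (1 / Real.pi) * ‖deriv γ z‖ ^ 2))
    (hgrowth : ∃ A B : ℝ, ∀ r ∈ Ici r₀, T r ≤ A * Real.log r + B) :
    ∃ g : ℂ → ℂ, DifferentiableOn ℂ g (Metric.ball (0 : ℂ) 1) ∧
      ∀ w ∈ Metric.ball (0 : ℂ) 1, w ≠ 0 → g w = γ w⁻¹ := by
  obtain ⟨A, B, hAB⟩ := hgrowth
  subst hT
  have hU : IsOpen {z : ℂ | 1 < ‖z‖} := isOpen_lt continuous_const continuous_norm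
  have hγU : DifferentiableOn ℂ γ {z : ℂ | 1 < ‖z‖} := hγ.mono fun z (hz : 1 < ‖z‖) => hz.le
  have hcont : ContinuousOn (fun z => ‖deriv γ z‖ ^ 2) {z : ℂ | r₀ ≤ ‖z‖} :=
    ((hγU.deriv hU).continuousOn.norm.pow 2).mono fun z (hz : r₀ ≤ ‖z‖) => hr₀.trans_le hz
  have hE := dirichletEnergy_ne_top_of_characteristic_le_log hr₀ hcont hAB
  have hinv : ∀ w ∈ ball (0 : ℂ) 1 \ {0}, DifferentiableAt ℂ γ w⁻¹ := fun w hw =>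
    hγU.differentiableAt <| hU.mem_nhds <| show 1 < ‖w⁻¹‖ by
      rw [norm_inv, one_lt_inv₀ (norm_pos_iff.2 hw.2)]
      exact mem_ball_zero_iff.1 hw.1
  have hf : DifferentiableOn ℂ (γ ∘ (·⁻¹)) (ball 0 1 \ {0}) := fun w hw =>
    ((hinv w hw).comp w (differentiableAt_inv hw.2)).differentiableWithinAt
  have hr₀' : 0 < r₀⁻¹ := by positivity
  have hball : ball (0 : ℂ) r₀⁻¹ \ {0} ⊆ ball 0 1 \ {0} :=
    sdiff_subset_sdiff_left (ball_subset_ball (inv_le_one_of_one_le₀ hr₀.le))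
  have hEf : dirichletEnergy (γ ∘ (·⁻¹)) (ball 0 r₀⁻¹ \ {0}) ≠ ∞ := by
    rw [dirichletEnergy_comp (measurableSet_ball.diff (measurableSet_singleton 0))
      (fun w hw => differentiableAt_inv hw.2) (fun w hw => hinv w (hball hw)) inv_injective.injOn,
      image_inv_ball_zero_diff_zero hr₀', inv_inv]
    exact ne_top_of_le_ne_top hE (lintegral_mono_set fun z (hz : r₀ < ‖z‖) => hz.le)
  exact ⟨_, differentiableOn_update_limUnder_of_deriv_isLittleO (ball_mem_nhds 0 one_pos) hf
    (deriv_isLittleO_of_dirichletEnergy_ne_top hr₀' (hf.mono hball) hEf),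
    fun w _ hw => update_of_ne hw _ _⟩
end

section
/- Let ξ : {|z| ≥ r₀} → [0, ∞) be continuous and T(r) := ∫_{r₀}^r (dρ/ρ) ∫_{r₀≤|z|<ρ} ξ (i/2π)dz∧dz̄. Then the modified proximity function m(r) := (1/2π)∫₀^{2π} log ξ(re^{iθ}) dθ (where ξ > 0 on |z| = r) satisfies m(r) ≤ log( (d/ds)² T(r) ) − 2 log r, where d/ds = r·d/dr. -/
/-!
In polar coordinates the integral of `ξ` over the annulus `r₀ ≤ |z| < ρ` is
`2π ∫_{r₀}^ρ s M(s) ds`, where `M(s)` is the circle average of `ξ`. Hence `r T'(r)` is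
`∫_{r₀}^r s M(s) ds` and `(r d/dr)² T(r) = r² M(r)`. The claim is then Jensen's inequality for the
concave `log` and the probability measure `dθ/2π`, obtained by averaging the tangent-line bound
`log x ≤ log M + x/M - 1`.
-/

open MeasureTheory Set Filter Topology Real Metric

section PolarCoordinates

variable {E : Type*} [NormedAddCommGroup E] [NormedSpace ℝ E]

theorem Complex.continuous_polarCoord_symm : Continuous Complex.polarCoord.symm := by
  simp only [funext Complex.polarCoord_symm_apply]
  fun_prop

theorem Complex.setIntegral_comp_polarCoord_symm (f : ℂ → E) {s : Set ℂ} (hs : MeasurableSet s) :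
    ∫ p in polarCoord.target ∩ Complex.polarCoord.symm ⁻¹' s, p.1 • f (Complex.polarCoord.symm p)
      = ∫ z in s, f z := by
  rw [← integral_indicator hs, ← Complex.integral_comp_polarCoord_symm,
    ← setIntegral_indicator (Complex.continuous_polarCoord_symm.measurable hs)]
  simp only [indicator_smul_apply, ← indicator_comp_right]
  rfl

theorem Complex.polarCoord_target_inter_preimage_annulus {a b : ℝ} (ha : 0 < a) :
    polarCoord.target ∩ Complex.polarCoord.symm ⁻¹' {z | a ≤ ‖z‖ ∧ ‖z‖ < b}
      = Ico a b ×ˢ Ioo (-π) π := by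
  ext ⟨s, θ⟩
  simp only [polarCoord_target, mem_inter_iff, mem_prod, mem_preimage, mem_ofPred_eq,
    Complex.norm_polarCoord_symm, mem_Ioi, mem_Ico]
  constructor
  · rintro ⟨⟨hs, hθ⟩, h1, h2⟩
    rw [abs_of_pos hs] at h1 h2
    exact ⟨⟨h1, h2⟩, hθ⟩
  · rintro ⟨⟨h1, h2⟩, hθ⟩
    have hs : 0 < s := ha.trans_le h1
    rw [abs_of_pos hs]
    exact ⟨⟨hs, hθ⟩, h1, h2⟩

theorem Complex.polarCoord_symm_eq_circleMap (p : ℝ × ℝ) :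
    Complex.polarCoord.symm p = circleMap 0 p.1 p.2 := by
  rw [Complex.polarCoord_symm_apply, circleMap_zero, Complex.exp_mul_I]
  push_cast
  ring

theorem integral_Ioo_circleMap_eq_two_pi_smul_circleAverage [CompleteSpace E] (f : ℂ → E) (c : ℂ)
    (R : ℝ) : ∫ θ in Ioo (-π) π, f (circleMap c R θ) = (2 * π) • circleAverage f c R := by
  rw [circleAverage_eq_integral_add (-π), intervalIntegral.integral_comp_add_right
    (fun θ => f (circleMap c R θ)), smul_inv_smul₀ two_pi_pos.ne', zero_add,
    show 2 * π + -π = π by ring, intervalIntegral.integral_of_le (by linarith [pi_pos]),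
    integral_Ioc_eq_integral_Ioo]

theorem setIntegral_annulus_eq_two_pi_smul_integral_circleAverage [CompleteSpace E] {f : ℂ → E}
    {a b : ℝ} (ha : 0 < a) (hab : a ≤ b) (hf : ContinuousOn f {z | a ≤ ‖z‖ ∧ ‖z‖ ≤ b}) :
    ∫ z in {z : ℂ | a ≤ ‖z‖ ∧ ‖z‖ < b}, f z = (2 * π) • ∫ s in a..b, s • circleAverage f 0 s := by
  have hmeas : MeasurableSet {z : ℂ | a ≤ ‖z‖ ∧ ‖z‖ < b} :=
    (measurableSet_le measurable_const measurable_norm).inter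
      (measurableSet_lt measurable_norm measurable_const)
  have hcont : ContinuousOn (fun p : ℝ × ℝ => p.1 • f (Complex.polarCoord.symm p))
      (Icc a b ×ˢ Icc (-π) π) := by
    refine continuous_fst.continuousOn.smul
      (hf.comp Complex.continuous_polarCoord_symm.continuousOn ?_)
    rintro ⟨s, θ⟩ ⟨⟨h1, h2⟩, -⟩
    simp [abs_of_pos (ha.trans_le h1), h1, h2]
  have hint : IntegrableOn (fun p : ℝ × ℝ => p.1 • f (Complex.polarCoord.symm p))
      (Ico a b ×ˢ Ioo (-π) π) (volume.prod volume) :=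
    (hcont.integrableOn_compact (isCompact_Icc.prod isCompact_Icc)).mono_set
      (prod_mono Ico_subset_Icc_self Ioo_subset_Icc_self)
  rw [← Complex.setIntegral_comp_polarCoord_symm f hmeas,
    Complex.polarCoord_target_inter_preimage_annulus ha, Measure.volume_eq_prod,
    setIntegral_prod _ hint, intervalIntegral.integral_of_le hab, integral_Ico_eq_integral_Ioo,
    integral_Ioc_eq_integral_Ioo, ← integral_smul]
  refine setIntegral_congr_fun measurableSet_Ioo fun s _ => ?_
  simp only [Complex.polarCoord_symm_eq_circleMap, integral_smul,
    integral_Ioo_circleMap_eq_two_pi_smul_circleAverage]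
  rw [smul_comm]

end PolarCoordinates

theorem circleAverage_pos {f : ℂ → ℝ} {c : ℂ} {R : ℝ} (hf : CircleIntegrable f c R)
    (hpos : ∀ z ∈ sphere c |R|, 0 < f z) : 0 < circleAverage f c R :=
  mul_pos (inv_pos.2 two_pi_pos) (intervalIntegral.intervalIntegral_pos_of_pos_on hf
    (fun θ _ => hpos _ (circleMap_mem_sphere' c R θ)) two_pi_pos)

theorem circleAverage_log_le_log_circleAverage {f : ℂ → ℝ} {c : ℂ} {R : ℝ}
    (hf : ContinuousOn f (sphere c |R|)) (hpos : ∀ z ∈ sphere c |R|, 0 < f z) :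
    circleAverage (fun z => log (f z)) c R ≤ log (circleAverage f c R) := by
  set A := circleAverage f c R
  have hA : 0 < A := circleAverage_pos hf.circleIntegrable' hpos
  have hlog : CircleIntegrable (fun z => log (f z)) c R :=
    (continuousOn_log.comp hf fun z hz => (hpos z hz).ne').circleIntegrable'
  have hf' : CircleIntegrable (fun z => A⁻¹ • f z) c R := hf.circleIntegrable'.smul A⁻¹
  have htangent : ∀ z ∈ sphere c |R|, log (f z) ≤ log A + (A⁻¹ • f z - 1) := fun z hz => by
    have := log_le_sub_one_of_pos (mul_pos (inv_pos.2 hA) (hpos z hz))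
    rw [log_mul (inv_pos.2 hA).ne' (hpos z hz).ne', log_inv] at this
    rw [smul_eq_mul]
    linarith
  have hconst (a : ℝ) : CircleIntegrable (fun _ => a) c R := circleIntegrable_const a c R
  have hf'' : CircleIntegrable (fun z => A⁻¹ • f z - 1) c R := hf'.sub (hconst 1)
  calc circleAverage (fun z => log (f z)) c R
      ≤ circleAverage (fun z => log A + (A⁻¹ • f z - 1)) c R :=
        circleAverage_mono hlog ((hconst _).add hf'') htangent
    _ = log A + (A⁻¹ * A - 1) := by
        rw [circleAverage_fun_add (hconst _) hf'', circleAverage_fun_sub hf' (hconst 1),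
          circleAverage_fun_smul, circleAverage_const, circleAverage_const, smul_eq_mul]
    _ = log A := by rw [inv_mul_cancel₀ hA.ne', sub_self, add_zero]

theorem continuousOn_primitive_Ici {h : ℝ → ℝ} {a : ℝ} (hh : ContinuousOn h (Ici a)) :
    ContinuousOn (fun v => ∫ s in a..v, h s) (Ici a) := by
  intro x hx
  have hIcc : uIcc a (x + 1) = Icc a (x + 1) := uIcc_of_le (by linarith [mem_Ici.1 hx])
  have hnhds : Icc a (x + 1) ∈ 𝓝[Ici a] x :=
    mem_nhdsWithin.2 ⟨Iio (x + 1), isOpen_Iio, by simp, fun y hy => ⟨hy.2, hy.1.le⟩⟩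
  have hcont := intervalIntegral.continuousOn_primitive_interval (μ := volume)
    ((hh.mono (hIcc ▸ Icc_subset_Ici_self)).integrableOn_compact isCompact_uIcc)
  exact (hcont x (hIcc ▸ ⟨hx, by linarith⟩)).mono_of_mem_nhdsWithin (hIcc ▸ hnhds)

theorem hasDerivAt_of_forall_gt_eq_integral {G g : ℝ → ℝ} {a t : ℝ} (hat : a < t)
    (hg : ContinuousOn g (Ici a)) (hG : ∀ v, a < v → G v = ∫ ρ in a..v, g ρ) :
    HasDerivAt G (g t) t := by
  have hFTC : HasDerivAt (fun v => ∫ ρ in a..v, g ρ) (g t) t :=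
    intervalIntegral.integral_hasDerivAt_right
      ((hg.mono (uIcc_of_le hat.le ▸ Icc_subset_Ici_self)).intervalIntegrable)
      ((hg.mono Ioi_subset_Ici_self).stronglyMeasurableAtFilter isOpen_Ioi t hat)
      (hg.continuousAt (Ici_mem_nhds hat))
  exact hFTC.congr_of_eventuallyEq (eventually_gt_nhds hat |>.mono hG)

theorem deriv_id_mul_deriv_of_forall_gt_eq_integral_inv_mul_integral {G h : ℝ → ℝ} {a t : ℝ}
    (ha : 0 < a) (hat : a < t) (hh : ContinuousOn h (Ici a))
    (hG : ∀ v, a < v → G v = ∫ ρ in a..v, ρ⁻¹ * ∫ s in a..ρ, h s) :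
    deriv (fun u => u * deriv G u) t = h t := by
  have hg : ContinuousOn (fun ρ => ρ⁻¹ * ∫ s in a..ρ, h s) (Ici a) :=
    (continuousOn_inv₀.mono fun x hx => (ha.trans_le hx).ne').mul (continuousOn_primitive_Ici hh)
  have hmul : ∀ u, a < u → u * deriv G u = ∫ s in a..u, h s := fun u hau => by
    rw [(hasDerivAt_of_forall_gt_eq_integral hau hg hG).deriv,
      mul_inv_cancel_left₀ (ha.trans hau).ne']
  exact (hasDerivAt_of_forall_gt_eq_integral hat hh hmul).deriv

theorem proximity_le_log_second_derivative_general (r₀ : ℝ) (hr₀ : 1 < r₀)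
    (ξ : ℂ → ℝ) (hcont : ContinuousOn ξ {z : ℂ | r₀ ≤ ‖z‖})
    (r : ℝ) (hr : r₀ < r)
    (hpos : ∀ z : ℂ, ‖z‖ = r → 0 < ξ z) :
    let T : ℝ → ℝ := fun t => ∫ ρ in r₀..t, (1 / ρ) *
      ((1 / (2 * Real.pi)) * ∫ z in {z : ℂ | r₀ ≤ ‖z‖ ∧ ‖z‖ < ρ}, ξ z)
    (1 / (2 * Real.pi)) * (∫ θ in (0 : ℝ)..(2 * Real.pi),
        Real.log (ξ ((r : ℂ) * Complex.exp (θ * Complex.I)))) ≤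
      Real.log (r * deriv (fun t => t * deriv T t) r) - 2 * Real.log r := by
  intro T
  have hr₀pos : 0 < r₀ := one_pos.trans hr₀
  have hrpos : 0 < r := hr₀pos.trans hr
  have hsphere : ∀ z ∈ sphere (0 : ℂ) |r|, ‖z‖ = r := by simp [abs_of_pos hrpos]
  have hξr : ContinuousOn ξ (sphere 0 |r|) :=
    hcont.mono fun z hz => (hsphere z hz).ge.trans' hr.le
  have hξr_pos : ∀ z ∈ sphere (0 : ℂ) |r|, 0 < ξ z := fun z hz => hpos z (hsphere z hz)
  have hcA : ContinuousOn (fun s => s * circleAverage ξ 0 s) (Ici r₀) :=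
    continuousOn_id.mul (ContinuousOn.circleAverage (by simpa using hcont)
      fun s hs => hr₀pos.le.trans hs)
  have hT : ∀ v, r₀ < v → T v = ∫ ρ in r₀..v, ρ⁻¹ * ∫ s in r₀..ρ, s * circleAverage ξ 0 s :=
    fun v hv => intervalIntegral.integral_congr fun ρ hρ => by
      rw [uIcc_of_le hv.le] at hρ
      rw [setIntegral_annulus_eq_two_pi_smul_integral_circleAverage hr₀pos hρ.1
        (hcont.mono fun z hz => hz.1)]
      simp only [smul_eq_mul]
      field_simp
  have hd2T : deriv (fun t => t * deriv T t) r = r * circleAverage ξ 0 r :=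
    deriv_id_mul_deriv_of_forall_gt_eq_integral_inv_mul_integral hr₀pos hr hcA hT
  calc (1 / (2 * π)) * ∫ θ in (0 : ℝ)..(2 * π), log (ξ ((r : ℂ) * Complex.exp (θ * Complex.I)))
      = circleAverage (fun z => log (ξ z)) 0 r := by
        simp only [circleAverage_def, circleMap_zero, smul_eq_mul, one_div]
    _ ≤ log (circleAverage ξ 0 r) := circleAverage_log_le_log_circleAverage hξr hξr_pos
    _ = log (r * deriv (fun t => t * deriv T t) r) - 2 * log r := by
        rw [hd2T, ← mul_assoc,
          log_mul (by positivity) (circleAverage_pos hξr.circleIntegrable' hξr_pos).ne',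
          log_mul hrpos.ne' hrpos.ne']
        ring

/-- Lemma on the modified proximity function: with `T(r)` the characteristic of the
density `ξ` and `m(r) = (1/2π)∫₀^{2π} log ξ(re^{iθ}) dθ`, concavity of `log` gives
`m(r) ≤ log((d/ds)² T(r)) − 2 log r`, where `d/ds = r·d/dr` is the logarithmic
derivative (so `(d/ds)² T(r) = r·(d/dr)(r·(d/dr)T)(r)`). -/
theorem proximity_le_log_second_derivative (r₀ : ℝ) (hr₀ : 1 < r₀)
    (ξ : ℂ → ℝ) (hcont : ContinuousOn ξ {z : ℂ | r₀ ≤ ‖z‖})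
    (hnonneg : ∀ z : ℂ, r₀ ≤ ‖z‖ → 0 ≤ ξ z)
    (r : ℝ) (hr : r₀ < r)
    (hpos : ∀ z : ℂ, ‖z‖ = r → 0 < ξ z) :
    let T : ℝ → ℝ := fun t => ∫ ρ in r₀..t, (1 / ρ) *
      ((1 / (2 * Real.pi)) * ∫ z in {z : ℂ | r₀ ≤ ‖z‖ ∧ ‖z‖ < ρ}, ξ z)
    (1 / (2 * Real.pi)) * (∫ θ in (0 : ℝ)..(2 * Real.pi),
        Real.log (ξ ((r : ℂ) * Complex.exp (θ * Complex.I)))) ≤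
      Real.log (r * deriv (fun t => t * deriv T t) r) - 2 * Real.log r :=
  proximity_le_log_second_derivative_general r₀ hr₀ ξ hcont r hr hpos
end
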